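/- Let z, w be points of the upper half-plane ℍ and let v₀ ∈ ℂ. Then the limit, as the real parameter h tends to 0, of ρ(Re(z + h v₀) + Im(z + h v₀) · w, Re(z) + Im(z) · w) / |h| exists and equals |v₀ + Im(v₀) · (w − i)| / (Im(z) · Im(w)). -/

import Mathlib

open MeasureTheory

/-- The hyperbolic distance `ρ(z,w) = 2 arsinh(|z − w| / (2 √(Im z Im w)))`. -/
noncomputable def hypd (z w : ℂ) : ℝ :=
  2 * Real.arsinh (‖z - w‖ / (2 * Real.sqrt (z.im * w.im)))

/-!
The map `x ↦ Re x + Im x · w` is `ℝ`-linear and multiplies imaginary parts by `Im w`, so the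
distance in question is `2 arsinh(|h| a(h))` with `a(h) → ‖v₀ + Im v₀ (w − i)‖ / (2 Im z Im w)`.
Since `arsinh` has derivative `1` at `0`, dividing by `|h|` gives the limit `2 a(0)`.
-/

open Filter Topology Asymptotics

theorem HasDerivAt.tendsto_comp_mul_div {α : Type*} {l : Filter α} {f : ℝ → ℝ} {f' L : ℝ}
    {ε a : α → ℝ} (hf : HasDerivAt f f' 0) (hf0 : f 0 = 0) (hε : Tendsto ε l (𝓝 0))
    (hε0 : ∀ᶠ x in l, ε x ≠ 0) (ha : Tendsto a l (𝓝 L)) :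
    Tendsto (fun x => f (ε x * a x) / ε x) l (𝓝 (f' * L)) := by
  have hu : Tendsto (fun x => ε x * a x) l (𝓝 0) := by simpa using hε.mul ha
  have hlin : (fun x => f (ε x * a x) - ε x * a x * f') =o[l] fun x => ε x * a x := by
    simpa [hf0, Function.comp_def] using (hasDerivAt_iff_isLittleO.mp hf).comp_tendsto hu
  have hbig : (fun x => ε x * a x) =O[l] ε := by
    simpa using (isBigO_refl ε l).mul (ha.isBigO_one ℝ)
  have herr := (hlin.trans_isBigO hbig).tendsto_div_nhds_zero
  have hsum := herr.add (ha.const_mul f')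
  rw [zero_add] at hsum
  refine hsum.congr' ?_
  filter_upwards [hε0] with x hx
  field_simp
  ring

theorem hypd_re_add_im_mul_add_mul (z w v : ℂ) (h : ℝ) :
    hypd (((z + (h : ℂ) * v).re : ℂ) + ((z + (h : ℂ) * v).im : ℂ) * w)
        ((z.re : ℂ) + (z.im : ℂ) * w) =
      2 * Real.arsinh (|h| * (‖v + (v.im : ℂ) * (w - Complex.I)‖ /
        (2 * Real.sqrt ((z.im + h * v.im) * w.im * (z.im * w.im))))) := by
  have hdiff : (((z + (h : ℂ) * v).re : ℂ) + ((z + (h : ℂ) * v).im : ℂ) * w)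
      - ((z.re : ℂ) + (z.im : ℂ) * w) = (h : ℂ) * (v + (v.im : ℂ) * (w - Complex.I)) := by
    apply Complex.ext <;> simp <;> ring
  have him : ((((z + (h : ℂ) * v).re : ℂ)) + ((z + (h : ℂ) * v).im : ℂ) * w).im
      = (z.im + h * v.im) * w.im := by simp
  have him' : (((z.re : ℂ)) + (z.im : ℂ) * w).im = z.im * w.im := by simp
  rw [hypd, hdiff, him, him', norm_mul, Complex.norm_real, Real.norm_eq_abs, mul_div_assoc]

/-- For `z, w ∈ ℍ` and `v₀ ∈ ℂ`, as the real parameter `h` tends to `0` (through nonzero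
values), `ρ(Re(z + h v₀) + Im(z + h v₀) w, Re z + Im z · w) / |h|` tends to
`|v₀ + Im(v₀)(w − i)| / (Im z · Im w)`. -/
theorem stmt9 (z w : ℂ) (hz : 0 < z.im) (hw : 0 < w.im) (v₀ : ℂ) :
    Filter.Tendsto
      (fun h : ℝ =>
        hypd (((z + (h : ℂ) * v₀).re : ℂ) + ((z + (h : ℂ) * v₀).im : ℂ) * w)
            ((z.re : ℂ) + (z.im : ℂ) * w) / |h|)
      (nhdsWithin (0 : ℝ) {0}ᶜ)
      (nhds (‖v₀ + (v₀.im : ℂ) * (w - Complex.I)‖ / (z.im * w.im))) := by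
  set C := ‖v₀ + (v₀.im : ℂ) * (w - Complex.I)‖
  set Z := z.im * w.im
  have hZ : 0 < Z := mul_pos hz hw
  have hderiv : HasDerivAt (fun x => 2 * Real.arsinh x) 2 0 := by
    simpa using (Real.hasDerivAt_arsinh 0).const_mul 2
  have habs : Tendsto (fun h : ℝ => |h|) (𝓝[≠] 0) (𝓝 0) :=
    (continuous_abs.tendsto' 0 0 abs_zero).mono_left nhdsWithin_le_nhds
  have habs0 : ∀ᶠ h : ℝ in 𝓝[≠] 0, |h| ≠ 0 :=
    eventually_nhdsWithin_of_forall fun h hh => abs_ne_zero.mpr hh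
  have hsqrt : Tendsto (fun h : ℝ => Real.sqrt ((z.im + h * v₀.im) * w.im * Z)) (𝓝[≠] 0)
      (𝓝 Z) := by
    have hcont : Continuous fun h : ℝ => Real.sqrt ((z.im + h * v₀.im) * w.im * Z) := by
      fun_prop
    have h0 : Real.sqrt ((z.im + 0 * v₀.im) * w.im * Z) = Z := by
      rw [zero_mul, add_zero]
      exact Real.sqrt_mul_self hZ.le
    exact (hcont.tendsto' 0 Z h0).mono_left nhdsWithin_le_nhds
  have ha : Tendsto (fun h : ℝ => C / (2 * Real.sqrt ((z.im + h * v₀.im) * w.im * Z)))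
      (𝓝[≠] 0) (𝓝 (C / (2 * Z))) :=
    tendsto_const_nhds.div (tendsto_const_nhds.mul hsqrt) (by positivity)
  have hlim := hderiv.tendsto_comp_mul_div (by simp) habs habs0 ha
  simp only [hypd_re_add_im_mul_add_mul]
  convert hlim using 2
  field_simp
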